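/- arXiv:2007.15743 — 2 statements merged into one kernel-verified Lean document; each statement's English description precedes it below -/
import Mathlib

section
/- Let G be a PLB graph on n vertices with exponent γ ∈ (2,3) and constant c₀, and fix a linear order on the vertices of G. For each vertex v, let d⁺_v denote the number of neighbors u of v such that either deg(u) > deg(v), or deg(u) = deg(v) and u comes after v in the linear order. Then Σ_v (d⁺_v)^2 ≤ C · n^{3/γ} for a constant C depending only on c₀ and γ. -/
/-- The number of vertices of `G` of degree exactly `d`. -/
noncomputable def degCount {V : Type*} [Fintype V] (G : SimpleGraph V) (d : ℕ) : ℕ :=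
  {v : V | {u | G.Adj v u}.ncard = d}.ncard

/-- `G` is power-law bounded with exponent `γ` and constant `c₀` if for every `r ≥ 0`,
`Σ_{d=2^r}^{2^(r+1)} n(d) ≤ c₀ n Σ_{d=2^r}^{2^(r+1)} d^(-γ)`. -/
def IsPLB {V : Type*} [Fintype V] (G : SimpleGraph V) (γ c₀ : ℝ) : Prop :=
  ∀ r : ℕ,
    (∑ d ∈ Finset.Icc (2 ^ r : ℕ) (2 ^ (r + 1)), (degCount G d : ℝ)) ≤
      c₀ * (Fintype.card V : ℝ) *
        ∑ d ∈ Finset.Icc (2 ^ r : ℕ) (2 ^ (r + 1)), (d : ℝ) ^ (-γ)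

/-- The out-degree of `v` when each edge of `G` is directed from its lower-degree
endpoint to its higher-degree endpoint (ties broken by the linear order): the number
of neighbors `u` of `v` with `deg u > deg v`, or `deg u = deg v` and `v < u`. -/
noncomputable def outDeg {V : Type*} [Fintype V] [LinearOrder V]
    (G : SimpleGraph V) (v : V) : ℕ :=
  {u : V | G.Adj v u ∧
    ({w | G.Adj v w}.ncard < {w | G.Adj u w}.ncard ∨
      ({w | G.Adj u w}.ncard = {w | G.Adj v w}.ncard ∧ v < u))}.ncard

/-!
Split the vertices at a degree threshold `2 ^ r ≈ n ^ (1 / γ)`. The PLB condition bounds the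
number of vertices with degree in `[2 ^ s, 2 ^ (s + 1))` by `2 c₀ n 2 ^ (s (1 - γ))`, so at most
`H = O(n 2 ^ (r (1 - γ))) = O(n ^ (1 / γ))` vertices have degree `≥ 2 ^ r`. Below the threshold
use `d⁺_v ≤ deg v`: the dyadic classes contribute the geometric sum `Σ_{s < r} n 2 ^ (s (3 - γ))`,
which is `O(n 2 ^ (r (3 - γ))) = O(n ^ (3 / γ))` because `γ < 3`. Above it, every out-neighbour
of `v` has degree at least `deg v ≥ 2 ^ r`, so `d⁺_v ≤ H`, and these vertices contribute at most
`H ^ 3 = O(n ^ (3 / γ))`.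
-/

open Finset

section Dyadic

variable {V : Type*} [Fintype V] (d : V → ℕ)

theorem sum_filter_mem_Ico_two_pow {M : Type*} [AddCommMonoid M] (f : V → M) (a b : ℕ) :
    ∑ v with d v ∈ Ico (2 ^ a) (2 ^ b), f v =
      ∑ s ∈ Ico a b, ∑ v with d v ∈ Ico (2 ^ s) (2 ^ (s + 1)), f v := by
  have hlog : ∀ v, d v ∈ Ico (2 ^ a) (2 ^ b) → Nat.log 2 (d v) ∈ Ico a b := fun v hv => by
    rw [mem_Ico] at hv ⊢
    exact ⟨Nat.le_log_of_pow_le one_lt_two hv.1,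
      Nat.log_lt_of_lt_pow ((Nat.two_pow_pos a).trans_le hv.1).ne' hv.2⟩
  rw [← sum_fiberwise_of_maps_to (g := fun v => Nat.log 2 (d v)) (t := Ico a b)
    (fun v hv => hlog v (mem_filter.1 hv).2)]
  refine sum_congr rfl fun s hs => sum_congr ?_ fun _ _ => rfl
  ext v
  simp only [mem_filter, mem_univ, true_and]
  constructor
  · rintro ⟨hv, rfl⟩
    exact mem_Ico.2 ((Nat.log_eq_iff
      (Or.inr ⟨one_lt_two, ((Nat.two_pow_pos a).trans_le (mem_Ico.1 hv).1).ne'⟩)).1 rfl)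
  · intro hv
    rw [mem_Ico] at hs hv
    have hv0 : d v ≠ 0 := by have := Nat.one_le_two_pow (n := s); omega
    refine ⟨mem_Ico.2 ⟨le_trans (Nat.pow_le_pow_right two_pos hs.1) hv.1,
      lt_of_lt_of_le hv.2 (Nat.pow_le_pow_right two_pos hs.2)⟩,
      (Nat.log_eq_iff (Or.inr ⟨one_lt_two, hv0⟩)).2 hv⟩

variable {d} {K β : ℝ}

theorem card_filter_two_pow_le_le
    (hblock : ∀ s, (#{v | d v ∈ Ico (2 ^ s) (2 ^ (s + 1))} : ℝ) ≤ K * β ^ s)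
    (hK : 0 ≤ K) (hβ0 : 0 ≤ β) (hβ1 : β < 1) (r : ℕ) :
    (#{v | 2 ^ r ≤ d v} : ℝ) ≤ K * β ^ r / (1 - β) := by
  have hlt : ∀ v, d v < 2 ^ (univ.sup d + 1) := fun v =>
    (le_sup (mem_univ v)).trans_lt (Nat.lt_two_pow_self.trans (Nat.pow_lt_pow_succ one_lt_two))
  have hset : #{v | 2 ^ r ≤ d v} = #{v | d v ∈ Ico (2 ^ r) (2 ^ (univ.sup d + 1))} := by
    congr 1; ext v; simp [hlt v]
  rw [hset, card_eq_sum_ones, sum_filter_mem_Ico_two_pow, Nat.cast_sum]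
  calc ∑ s ∈ Ico r (univ.sup d + 1), ((∑ v with d v ∈ Ico (2 ^ s) (2 ^ (s + 1)), 1 : ℕ) : ℝ)
      ≤ ∑ s ∈ Ico r (univ.sup d + 1), K * β ^ s := by
        gcongr with s; simpa [← card_eq_sum_ones] using hblock s
    _ ≤ K * β ^ r / (1 - β) := by
        rw [← mul_sum, mul_div_assoc]; gcongr; exact geom_sum_Ico_le_of_lt_one hβ0 hβ1

theorem sum_sq_filter_lt_two_pow_le
    (hblock : ∀ s, (#{v | d v ∈ Ico (2 ^ s) (2 ^ (s + 1))} : ℝ) ≤ K * β ^ s)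
    (hK : 0 ≤ K) (hβ : 1 < 4 * β) (r : ℕ) :
    ∑ v with d v < 2 ^ r, (d v : ℝ) ^ 2 ≤ 4 * K * (4 * β) ^ r / (4 * β - 1) := by
  -- isolated vertices, about which the dyadic bound says nothing, contribute `0`
  have hdeg_pos : ∑ v with d v < 2 ^ r, (d v : ℝ) ^ 2 =
      ∑ v with d v ∈ Ico (2 ^ 0) (2 ^ r), (d v : ℝ) ^ 2 := by
    rw [sum_filter, sum_filter]
    refine sum_congr rfl fun v _ => ?_
    by_cases h : d v = 0 <;> simp [h, Nat.one_le_iff_ne_zero]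
  rw [hdeg_pos, sum_filter_mem_Ico_two_pow, ← range_eq_Ico]
  calc ∑ s ∈ range r, ∑ v with d v ∈ Ico (2 ^ s) (2 ^ (s + 1)), (d v : ℝ) ^ 2
      ≤ ∑ s ∈ range r, (#{v | d v ∈ Ico (2 ^ s) (2 ^ (s + 1))} : ℝ) * (2 ^ (s + 1)) ^ 2 := by
        gcongr with s
        rw [← nsmul_eq_mul]
        refine sum_le_card_nsmul _ _ _ fun v hv => ?_
        have := (mem_Ico.1 (mem_filter.1 hv).2).2
        gcongr; exact_mod_cast this.le
    _ ≤ ∑ s ∈ range r, 4 * K * (4 * β) ^ s := sum_le_sum fun s _ =>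
        calc _ ≤ K * β ^ s * (2 ^ (s + 1)) ^ 2 := by gcongr; exact hblock s
          _ = 4 * K * (4 * β) ^ s := by rw [← pow_right_comm, pow_succ]; norm_num; ring
    _ ≤ 4 * K * (4 * β) ^ r / (4 * β - 1) := by
        rw [← mul_sum, geom_sum_eq hβ.ne', mul_div_assoc]
        gcongr
        linarith

end Dyadic

theorem four_mul_two_rpow_one_sub (γ : ℝ) : 4 * (2 : ℝ) ^ (1 - γ) = 2 ^ (3 - γ) := by
  rw [show 3 - γ = 2 + (1 - γ) by ring, Real.rpow_add two_pos]; norm_num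

theorem rpow_mul_rpow_three_sub_le {t y γ : ℝ} (ht : 0 < t) (hy0 : 0 ≤ y) (hy : y ≤ 2 * t)
    (hγ : γ ≤ 3) : t ^ γ * y ^ (3 - γ) ≤ 2 ^ (3 - γ) * t ^ 3 :=
  calc t ^ γ * y ^ (3 - γ) ≤ t ^ γ * (2 * t) ^ (3 - γ) := by
        gcongr
    _ = 2 ^ (3 - γ) * t ^ 3 := by
        rw [Real.mul_rpow zero_le_two ht.le, mul_left_comm, ← Real.rpow_add ht]
        norm_num

theorem rpow_mul_rpow_one_sub_le {t y γ : ℝ} (ht : 0 < t) (hty : t ≤ y) (hγ : 1 ≤ γ) :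
    t ^ γ * y ^ (1 - γ) ≤ t :=
  calc t ^ γ * y ^ (1 - γ) ≤ t ^ γ * t ^ (1 - γ) := by
        gcongr 1; exact Real.rpow_le_rpow_of_nonpos ht hty (by linarith)
    _ = t := by rw [← Real.rpow_add ht]; norm_num

section Graph

variable {V : Type*} [Fintype V] (G : SimpleGraph V)

theorem card_filter_ncard_neighborSet_mem_Icc (a b : ℕ) :
    #{v | (G.neighborSet v).ncard ∈ Icc a b} = ∑ d ∈ Icc a b, degCount G d := by
  rw [card_eq_sum_card_fiberwise (f := fun v => (G.neighborSet v).ncard)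
    (s := {v | (G.neighborSet v).ncard ∈ Icc a b}) (t := Icc a b)
    fun v hv => (mem_filter.1 hv).2]
  refine sum_congr rfl fun d hd => ?_
  rw [degCount, Set.ncard_eq_toFinset_card', Set.toFinset_ofPred, filter_filter]
  congr 1
  ext v
  simp only [mem_filter, mem_univ, true_and]
  exact ⟨And.right, fun h => ⟨h ▸ hd, h⟩⟩

theorem sum_Icc_two_pow_rpow_neg_le {γ : ℝ} (hγ : 0 ≤ γ) (s : ℕ) :
    ∑ d ∈ Icc (2 ^ s : ℕ) (2 ^ (s + 1)), (d : ℝ) ^ (-γ) ≤ 2 * ((2 : ℝ) ^ (1 - γ)) ^ s := by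
  have hcard : #(Icc (2 ^ s : ℕ) (2 ^ (s + 1))) = 2 ^ s + 1 := by
    rw [Nat.card_Icc, pow_succ]; omega
  calc ∑ d ∈ Icc (2 ^ s : ℕ) (2 ^ (s + 1)), (d : ℝ) ^ (-γ)
      ≤ ∑ _d ∈ Icc (2 ^ s : ℕ) (2 ^ (s + 1)), ((2 : ℝ) ^ s) ^ (-γ) := sum_le_sum fun d hd =>
        Real.rpow_le_rpow_of_nonpos (by positivity) (by exact_mod_cast (mem_Icc.1 hd).1)
          (neg_nonpos.2 hγ)
    _ = (2 ^ s + 1) * ((2 : ℝ) ^ s) ^ (-γ) := by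
        rw [sum_const, hcard, nsmul_eq_mul]; push_cast; rfl
    _ ≤ (2 * 2 ^ s) * ((2 : ℝ) ^ s) ^ (-γ) := by
        gcongr; linarith [one_le_pow₀ (M₀ := ℝ) (n := s) one_le_two]
    _ = 2 * ((2 : ℝ) ^ (1 - γ)) ^ s := by
        rw [Real.rpow_pow_comm zero_le_two, mul_assoc, Real.rpow_sub (by positivity),
          Real.rpow_one, Real.rpow_neg (by positivity)]
        field_simp

theorem IsPLB.card_dyadic_le {γ c₀ : ℝ} (hG : IsPLB G γ c₀) (hγ : 0 ≤ γ) (hc₀ : 0 ≤ c₀)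
    (s : ℕ) :
    (#{v | (G.neighborSet v).ncard ∈ Ico (2 ^ s) (2 ^ (s + 1))} : ℝ) ≤
      2 * c₀ * Fintype.card V * ((2 : ℝ) ^ (1 - γ)) ^ s :=
  calc (#{v | (G.neighborSet v).ncard ∈ Ico (2 ^ s) (2 ^ (s + 1))} : ℝ)
      ≤ #{v | (G.neighborSet v).ncard ∈ Icc (2 ^ s) (2 ^ (s + 1))} := by
        gcongr with v; exact Ico_subset_Icc_self
    _ ≤ c₀ * Fintype.card V * ∑ d ∈ Icc (2 ^ s : ℕ) (2 ^ (s + 1)), (d : ℝ) ^ (-γ) := by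
        rw [card_filter_ncard_neighborSet_mem_Icc]; exact_mod_cast hG s
    _ ≤ c₀ * Fintype.card V * (2 * ((2 : ℝ) ^ (1 - γ)) ^ s) := by
        gcongr; exact sum_Icc_two_pow_rpow_neg_le hγ s
    _ = 2 * c₀ * Fintype.card V * ((2 : ℝ) ^ (1 - γ)) ^ s := by ring

variable [LinearOrder V]

theorem outDeg_le_ncard_neighborSet (v : V) : outDeg G v ≤ (G.neighborSet v).ncard :=
  Set.ncard_le_ncard (fun _ hu => hu.1)

theorem outDeg_le_card_filter {k : ℕ} {v : V} (hk : k ≤ (G.neighborSet v).ncard) :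
    outDeg G v ≤ #{u | k ≤ (G.neighborSet u).ncard} := by
  rw [← Set.ncard_coe_finset]
  refine Set.ncard_le_ncard (fun u hu => ?_) (Finset.finite_toSet _)
  rw [coe_filter, Set.mem_ofPred_eq]
  rcases hu.2 with h | h
  · exact ⟨mem_univ u, hk.trans h.le⟩
  · exact ⟨mem_univ u, hk.trans h.1.ge⟩

theorem IsPLB.sum_sq_outDeg_le {γ c₀ : ℝ} (hG : IsPLB G γ c₀) (hγ1 : 1 < γ) (hγ3 : γ < 3)
    (hc₀ : 0 ≤ c₀) (r : ℕ) :
    ∑ v, (outDeg G v : ℝ) ^ 2 ≤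
      4 * (2 * c₀ * Fintype.card V) * (4 * (2 : ℝ) ^ (1 - γ)) ^ r / (4 * (2 : ℝ) ^ (1 - γ) - 1) +
        (2 * c₀ * Fintype.card V * ((2 : ℝ) ^ (1 - γ)) ^ r / (1 - (2 : ℝ) ^ (1 - γ))) ^ 3 := by
  have hK : 0 ≤ 2 * c₀ * Fintype.card V := by positivity
  have hβ1 : (2 : ℝ) ^ (1 - γ) < 1 := Real.rpow_lt_one_of_one_lt_of_neg one_lt_two (by linarith)
  have h4β : 1 < 4 * (2 : ℝ) ^ (1 - γ) := by
    rw [four_mul_two_rpow_one_sub]; exact Real.one_lt_rpow one_lt_two (by linarith)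
  have hblock := IsPLB.card_dyadic_le G hG (by linarith) hc₀
  set H := #{v | 2 ^ r ≤ (G.neighborSet v).ncard}
  rw [← sum_filter_add_sum_filter_not univ fun v => (G.neighborSet v).ncard < 2 ^ r]
  refine add_le_add ?_ ?_
  · calc ∑ v with (G.neighborSet v).ncard < 2 ^ r, (outDeg G v : ℝ) ^ 2
        ≤ ∑ v with (G.neighborSet v).ncard < 2 ^ r, ((G.neighborSet v).ncard : ℝ) ^ 2 := by
          gcongr; exact outDeg_le_ncard_neighborSet G _
      _ ≤ _ := sum_sq_filter_lt_two_pow_le hblock hK h4β r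
  · calc ∑ v with ¬(G.neighborSet v).ncard < 2 ^ r, (outDeg G v : ℝ) ^ 2
        ≤ ∑ v with 2 ^ r ≤ (G.neighborSet v).ncard, (H : ℝ) ^ 2 := by
          simp only [not_lt]
          gcongr with v hv
          exact outDeg_le_card_filter G (mem_filter.1 hv).2
      _ = (H : ℝ) ^ 3 := by rw [sum_const, nsmul_eq_mul]; ring
      _ ≤ _ := by
          gcongr; exact card_filter_two_pow_le_le hblock hK (by positivity) hβ1 r

end Graph

/-- For PLB graphs with exponent `γ ∈ (2,3)`, `Σ_v (d⁺_v)² ≤ C n^(3/γ)` for a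
constant `C` depending only on `c₀` and `γ`. -/
theorem plb_outdeg_square_bound (γ c₀ : ℝ) (hγ1 : 2 < γ) (hγ2 : γ < 3) (hc₀ : 0 < c₀) :
    ∃ C : ℝ, 0 < C ∧
      ∀ (V : Type) [Fintype V] [LinearOrder V] (G : SimpleGraph V), IsPLB G γ c₀ →
        (∑ v : V, ((outDeg G v : ℝ)) ^ 2) ≤ C * (Fintype.card V : ℝ) ^ (3 / γ) := by
  set β : ℝ := 2 ^ (1 - γ)
  have hβ1 : β < 1 := Real.rpow_lt_one_of_one_lt_of_neg one_lt_two (by linarith)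
  have h4β : 4 * β = 2 ^ (3 - γ) := four_mul_two_rpow_one_sub γ
  have h4β1 : 1 < 4 * β := h4β ▸ Real.one_lt_rpow one_lt_two (by linarith)
  have hA : 0 < 8 * c₀ / (4 * β - 1) := div_pos (by positivity) (by linarith)
  have hB : 0 < 2 * c₀ / (1 - β) := div_pos (by positivity) (by linarith)
  refine ⟨8 * c₀ / (4 * β - 1) * 2 ^ (3 - γ) + (2 * c₀ / (1 - β)) ^ 3, by positivity,
    fun V _ _ G hG => ?_⟩
  obtain hV | hV := isEmpty_or_nonempty V
  · simp [Real.zero_rpow (by positivity : 3 / γ ≠ 0)]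
  set n : ℝ := (Fintype.card V : ℝ)
  set t : ℝ := n ^ γ⁻¹
  have hn : n = t ^ γ := (Real.rpow_inv_rpow (by positivity) (by positivity)).symm
  have ht : 1 ≤ t := Real.one_le_rpow (by simp [n, Nat.one_le_iff_ne_zero]) (by positivity)
  obtain ⟨r, hrt, htr⟩ := exists_nat_pow_near ht one_lt_two
  set y : ℝ := 2 ^ (r + 1)
  have hy : y ≤ 2 * t := by simp only [y, pow_succ']; linarith
  calc ∑ v, (outDeg G v : ℝ) ^ 2
      ≤ 4 * (2 * c₀ * n) * (4 * β) ^ (r + 1) / (4 * β - 1) +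
        (2 * c₀ * n * β ^ (r + 1) / (1 - β)) ^ 3 :=
        IsPLB.sum_sq_outDeg_le G hG (by linarith) hγ2 hc₀.le (r + 1)
    _ = 8 * c₀ / (4 * β - 1) * (t ^ γ * y ^ (3 - γ)) +
        (2 * c₀ / (1 - β)) ^ 3 * (t ^ γ * y ^ (1 - γ)) ^ 3 := by
        rw [h4β, Real.rpow_pow_comm zero_le_two, Real.rpow_pow_comm zero_le_two, ← hn]
        ring
    _ ≤ 8 * c₀ / (4 * β - 1) * (2 ^ (3 - γ) * t ^ 3) + (2 * c₀ / (1 - β)) ^ 3 * t ^ 3 := by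
        gcongr _ * ?_ + _ * ?_ ^ 3
        · exact rpow_mul_rpow_three_sub_le (by linarith) (by positivity) hy hγ2.le
        · exact rpow_mul_rpow_one_sub_le (by linarith) htr.le (by linarith)
    _ = (8 * c₀ / (4 * β - 1) * 2 ^ (3 - γ) + (2 * c₀ / (1 - β)) ^ 3) * n ^ (3 / γ) := by
        rw [div_eq_mul_inv 3 γ, mul_comm 3, Real.rpow_mul (by positivity)]
        norm_cast
        ring
end

section
/- Let G be a PLB graph on n ≥ 2 vertices with constant c₀, fix a linear order on the vertices, and for each vertex v let d⁺_v denote the number of neighbors u of v such that either deg(u) > deg(v), or deg(u) = deg(v) and u comes after v in the linear order. If the PLB exponent is γ = 3, then Σ_v (d⁺_v)^2 ≤ C · n · log n for a constant C depending only on c₀; if the PLB exponent is γ > 3, then Σ_v (d⁺_v)^2 ≤ C · n for a constant C depending only on c₀ and γ. -/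
open Finset

theorem sum_sq_le_card_mul_of_le {V : Type*} (s : Finset V) (f : V → ℕ) {b : ℝ}
    (hf : ∀ v ∈ s, (f v : ℝ) ≤ b) : ∑ v ∈ s, (f v : ℝ) ^ 2 ≤ #s * b ^ 2 := by
  simpa using sum_le_card_nsmul s _ _ fun v hv => pow_le_pow_left₀ (Nat.cast_nonneg _) (hf v hv) 2

theorem geom_sum_range_le_of_lt_one {x : ℝ} (hx0 : 0 ≤ x) (hx1 : x < 1) (n : ℕ) :
    ∑ i ∈ range n, x ^ i ≤ (1 - x)⁻¹ := by
  have h := geom_sum_Ico_le_of_lt_one (m := 0) (n := n) hx0 hx1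
  rwa [← range_eq_Ico, pow_zero, one_div] at h

theorem sum_Icc_rpow_neg_le {γ : ℝ} (hγ : 0 ≤ γ) (r : ℕ) :
    ∑ d ∈ Icc (2 ^ r : ℕ) (2 ^ (r + 1)), (d : ℝ) ^ (-γ) ≤ 2 * ((2 : ℝ) ^ (1 - γ)) ^ r := by
  have hterm : ∀ d ∈ Icc (2 ^ r : ℕ) (2 ^ (r + 1)), (d : ℝ) ^ (-γ) ≤ ((2 : ℝ) ^ r) ^ (-γ) :=
    fun d hd => Real.rpow_le_rpow_of_nonpos (by positivity)
      (mod_cast (mem_Icc.1 hd).1) (neg_nonpos.2 hγ)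
  have hcard : #(Icc (2 ^ r : ℕ) (2 ^ (r + 1))) = 2 ^ r + 1 := by
    rw [Nat.card_Icc, pow_succ]
    omega
  calc ∑ d ∈ Icc (2 ^ r : ℕ) (2 ^ (r + 1)), (d : ℝ) ^ (-γ)
      ≤ (2 ^ r + 1) * ((2 : ℝ) ^ r) ^ (-γ) := by
        simpa [hcard] using sum_le_card_nsmul _ _ _ hterm
    _ ≤ 2 * 2 ^ r * ((2 : ℝ) ^ r) ^ (-γ) := by
        gcongr
        linarith [one_le_pow₀ (M₀ := ℝ) one_le_two (n := r)]
    _ = 2 * ((2 : ℝ) ^ (1 - γ)) ^ r := by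
        rw [← Real.rpow_pow_comm zero_le_two, mul_assoc, ← mul_pow, sub_eq_add_neg,
          Real.rpow_add two_pos, Real.rpow_one]

theorem natLog_four_add_one_le_three_mul_log {n : ℕ} (hn : 2 ≤ n) :
    (Nat.log 4 n : ℝ) + 1 ≤ 3 * Real.log n := by
  have hlog2 : 1 ≤ 2 * Real.log 2 := by linarith [Real.log_two_gt_d9]
  have hlogn : Real.log 2 ≤ Real.log n := Real.log_le_log two_pos (mod_cast hn)
  have hL : (Nat.log 4 n : ℝ) ≤ Real.log n := by
    refine (Real.natLog_le_logb n 4).trans (div_le_self (by linarith) ?_)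
    rw [show ((4 : ℕ) : ℝ) = 2 ^ 2 by norm_num, Real.log_pow]
    push_cast
    linarith
  linarith

namespace SimpleGraph

variable {V : Type*} [Fintype V] (G : SimpleGraph V) [DecidableRel G.Adj]

theorem ncard_setOf_adj (v : V) : {w | G.Adj v w}.ncard = G.degree v := by
  rw [Set.ncard_eq_toFinset_card']
  rfl

theorem degCount_eq_card_filter (d : ℕ) : degCount G d = #{v | G.degree v = d} := by
  simp only [degCount, ncard_setOf_adj, ← Set.ncard_coe_finset, coe_filter, mem_univ, true_and]

/-- Consecutive bands share an endpoint, as the ranges in `IsPLB` do. -/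
def degBand (r : ℕ) : Finset V := {v | G.degree v ∈ Icc (2 ^ r) (2 ^ (r + 1))}

theorem card_degBand (r : ℕ) :
    #(G.degBand r) = ∑ d ∈ Icc (2 ^ r) (2 ^ (r + 1)), degCount G d := by
  rw [card_eq_sum_card_fiberwise (s := G.degBand r) fun v hv => (mem_filter.1 hv).2]
  refine sum_congr rfl fun d hd => ?_
  rw [degCount_eq_card_filter, degBand, filter_filter]
  congr 1
  ext v
  simp only [mem_filter, mem_univ, true_and, and_iff_right_iff_imp]
  rintro rfl
  exact hd

theorem mem_degBand_log {v : V} (hv : G.degree v ≠ 0) :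
    v ∈ G.degBand (Nat.log 2 (G.degree v)) := by
  simp only [degBand, mem_filter, mem_univ, true_and, mem_Icc]
  exact ⟨Nat.pow_log_le_self 2 hv, (Nat.lt_pow_succ_log_self one_lt_two _).le⟩

theorem log_degree_lt_card (v : V) : Nat.log 2 (G.degree v) < Fintype.card V :=
  (Nat.log_le_self 2 _).trans_lt (G.degree_lt_card_verts v)

theorem sum_le_sum_degBand (f : V → ℝ) (hf : 0 ≤ f) (hf0 : ∀ v, G.degree v = 0 → f v = 0) :
    ∑ v, f v ≤ ∑ r ∈ range (Fintype.card V), ∑ v ∈ G.degBand r, f v := by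
  rw [← sum_filter_of_ne (p := fun v => G.degree v ≠ 0) fun v _ hv h => hv (hf0 v h),
    ← sum_fiberwise_of_maps_to (g := fun v => Nat.log 2 (G.degree v))
      fun v _ => mem_range.2 (G.log_degree_lt_card v)]
  refine sum_le_sum fun r _ => sum_le_sum_of_subset_of_nonneg ?_ fun v _ _ => hf v
  intro v hv
  simp only [mem_filter, mem_univ, true_and] at hv
  exact hv.2 ▸ G.mem_degBand_log hv.1

theorem card_degree_ge_le_sum_card_degBand (r : ℕ) :
    #{v | 2 ^ r ≤ G.degree v} ≤ ∑ s ∈ Ico r (Fintype.card V), #(G.degBand s) := by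
  classical
  refine (card_le_card fun v hv => mem_biUnion.2 ?_).trans card_biUnion_le
  have hr : 2 ^ r ≤ G.degree v := (mem_filter.1 hv).2
  have hv0 : G.degree v ≠ 0 := (Nat.pos_of_ne_zero (by positivity)).trans_le hr |>.ne'
  exact ⟨_, mem_Ico.2 ⟨(Nat.le_log_iff_pow_le one_lt_two hv0).2 hr, G.log_degree_lt_card v⟩,
    G.mem_degBand_log hv0⟩

variable [LinearOrder V]

theorem outDeg_le_degree (v : V) : outDeg G v ≤ G.degree v :=
  G.ncard_setOf_adj v ▸ Set.ncard_le_ncard (fun _ hu => hu.1)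

theorem outDeg_le_card_degree_ge {k : ℕ} {v : V} (hk : k ≤ G.degree v) :
    outDeg G v ≤ #{u | k ≤ G.degree u} := by
  rw [outDeg, ← Set.ncard_coe_finset]
  refine Set.ncard_le_ncard (fun u ⟨_, hu⟩ => ?_)
  simp only [ncard_setOf_adj, coe_filter, mem_univ, true_and, Set.mem_ofPred_eq] at hu ⊢
  rcases hu with hu | ⟨hu, _⟩ <;> omega

theorem sum_sq_outDeg_degBand_le (r : ℕ) :
    ∑ v ∈ G.degBand r, (outDeg G v : ℝ) ^ 2 ≤ #(G.degBand r) * 4 ^ (r + 1) := by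
  refine (sum_sq_le_card_mul_of_le _ _ (b := 2 ^ (r + 1)) fun v hv => ?_).trans_eq
    (by rw [← pow_mul, mul_comm (r + 1), pow_mul]; norm_num)
  have hv : G.degree v ≤ 2 ^ (r + 1) := (mem_Icc.1 (mem_filter.1 hv).2).2
  exact_mod_cast (G.outDeg_le_degree v).trans hv

theorem sum_sq_outDeg_degBand_le_sq_card (r : ℕ) :
    ∑ v ∈ G.degBand r, (outDeg G v : ℝ) ^ 2 ≤
      #(G.degBand r) * (#{u | 2 ^ r ≤ G.degree u} : ℝ) ^ 2 :=
  sum_sq_le_card_mul_of_le _ _ fun _ hv =>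
    mod_cast G.outDeg_le_card_degree_ge (mem_Icc.1 (mem_filter.1 hv).2).1

theorem sum_sq_outDeg_le_sum_degBand :
    ∑ v, (outDeg G v : ℝ) ^ 2 ≤
      ∑ r ∈ range (Fintype.card V), ∑ v ∈ G.degBand r, (outDeg G v : ℝ) ^ 2 :=
  G.sum_le_sum_degBand _ (fun _ => by positivity) fun v hv => by
    simpa [hv] using G.outDeg_le_degree v

end SimpleGraph

namespace IsPLB

variable {V : Type*} [Fintype V] {G : SimpleGraph V} [DecidableRel G.Adj] {γ c₀ : ℝ}

theorem card_degBand_le (h : IsPLB G γ c₀) (hγ : 0 ≤ γ) (hc₀ : 0 ≤ c₀) (r : ℕ) :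
    (#(G.degBand r) : ℝ) ≤ 2 * c₀ * Fintype.card V * ((2 : ℝ) ^ (1 - γ)) ^ r :=
  calc (#(G.degBand r) : ℝ) = ∑ d ∈ Icc (2 ^ r : ℕ) (2 ^ (r + 1)), (degCount G d : ℝ) := by
        exact_mod_cast G.card_degBand r
    _ ≤ c₀ * Fintype.card V * ∑ d ∈ Icc (2 ^ r : ℕ) (2 ^ (r + 1)), (d : ℝ) ^ (-γ) := h r
    _ ≤ c₀ * Fintype.card V * (2 * ((2 : ℝ) ^ (1 - γ)) ^ r) := by
        gcongr
        exact sum_Icc_rpow_neg_le hγ r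
    _ = 2 * c₀ * Fintype.card V * ((2 : ℝ) ^ (1 - γ)) ^ r := by ring

theorem card_degree_ge_le (h : IsPLB G γ c₀) (hγ : 1 < γ) (hc₀ : 0 ≤ c₀) (r : ℕ) :
    (#{v | 2 ^ r ≤ G.degree v} : ℝ) ≤
      2 * c₀ * Fintype.card V * ((2 : ℝ) ^ (1 - γ)) ^ r / (1 - 2 ^ (1 - γ)) := by
  have hx1 : (2 : ℝ) ^ (1 - γ) < 1 := Real.rpow_lt_one_of_one_lt_of_neg one_lt_two (by linarith)
  calc (#{v | 2 ^ r ≤ G.degree v} : ℝ)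
      ≤ ∑ s ∈ Ico r (Fintype.card V), (#(G.degBand s) : ℝ) :=
        mod_cast G.card_degree_ge_le_sum_card_degBand r
    _ ≤ ∑ s ∈ Ico r (Fintype.card V), 2 * c₀ * Fintype.card V * ((2 : ℝ) ^ (1 - γ)) ^ s :=
        sum_le_sum fun s _ => h.card_degBand_le (by linarith) hc₀ s
    _ ≤ 2 * c₀ * Fintype.card V * (((2 : ℝ) ^ (1 - γ)) ^ r / (1 - 2 ^ (1 - γ))) := by
        rw [← mul_sum]
        gcongr
        exact geom_sum_Ico_le_of_lt_one (by positivity) hx1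
    _ = _ := (mul_div_assoc ..).symm

variable [LinearOrder V]

theorem sum_sq_outDeg_degBand_le (h : IsPLB G γ c₀) (hγ : 0 ≤ γ) (hc₀ : 0 ≤ c₀) (r : ℕ) :
    ∑ v ∈ G.degBand r, (outDeg G v : ℝ) ^ 2 ≤
      8 * c₀ * Fintype.card V * ((2 : ℝ) ^ (3 - γ)) ^ r := by
  have h4 : 4 * (2 : ℝ) ^ (1 - γ) = 2 ^ (3 - γ) := by
    rw [show 3 - γ = 2 + (1 - γ) by ring, Real.rpow_add two_pos]
    norm_num
  calc ∑ v ∈ G.degBand r, (outDeg G v : ℝ) ^ 2 ≤ #(G.degBand r) * 4 ^ (r + 1) :=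
        G.sum_sq_outDeg_degBand_le r
    _ ≤ 2 * c₀ * Fintype.card V * ((2 : ℝ) ^ (1 - γ)) ^ r * 4 ^ (r + 1) := by
        gcongr
        exact h.card_degBand_le hγ hc₀ r
    _ = 8 * c₀ * Fintype.card V * ((2 : ℝ) ^ (3 - γ)) ^ r := by
        rw [← h4, mul_pow]
        ring

theorem sum_sq_outDeg_le_s17 (h : IsPLB G γ c₀) (hγ : 3 < γ) (hc₀ : 0 ≤ c₀) :
    ∑ v, (outDeg G v : ℝ) ^ 2 ≤ 8 * c₀ / (1 - 2 ^ (3 - γ)) * Fintype.card V := by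
  have hy1 : (2 : ℝ) ^ (3 - γ) < 1 := Real.rpow_lt_one_of_one_lt_of_neg one_lt_two (by linarith)
  calc ∑ v, (outDeg G v : ℝ) ^ 2
      ≤ ∑ r ∈ range (Fintype.card V), ∑ v ∈ G.degBand r, (outDeg G v : ℝ) ^ 2 :=
        G.sum_sq_outDeg_le_sum_degBand
    _ ≤ ∑ r ∈ range (Fintype.card V), 8 * c₀ * Fintype.card V * ((2 : ℝ) ^ (3 - γ)) ^ r :=
        sum_le_sum fun r _ => h.sum_sq_outDeg_degBand_le (by linarith) hc₀ r
    _ ≤ 8 * c₀ * Fintype.card V * (1 - 2 ^ (3 - γ))⁻¹ := by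
        rw [← mul_sum]
        gcongr
        exact geom_sum_range_le_of_lt_one (by positivity) hy1 _
    _ = 8 * c₀ / (1 - 2 ^ (3 - γ)) * Fintype.card V := by ring

theorem sum_sq_outDeg_degBand_le_of_card_lt (h : IsPLB G 3 c₀) (hc₀ : 0 ≤ c₀) {r : ℕ}
    (hr : Fintype.card V < 4 ^ r) :
    ∑ v ∈ G.degBand r, (outDeg G v : ℝ) ^ 2 ≤ 16 * c₀ ^ 3 * Fintype.card V * (1 / 4) ^ r := by
  have hx : (2 : ℝ) ^ (1 - 3 : ℝ) = 1 / 4 := by norm_num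
  have hband := h.card_degBand_le (by norm_num) hc₀ r
  have hhigh := h.card_degree_ge_le (by norm_num) hc₀ r
  rw [hx] at hband hhigh
  have hq : (Fintype.card V : ℝ) * (1 / 4) ^ r ≤ 1 := by
    rw [div_pow, one_pow, ← div_eq_mul_one_div, div_le_one (by positivity)]
    exact_mod_cast hr.le
  calc ∑ v ∈ G.degBand r, (outDeg G v : ℝ) ^ 2
      ≤ #(G.degBand r) * (#{u | 2 ^ r ≤ G.degree u} : ℝ) ^ 2 :=
        G.sum_sq_outDeg_degBand_le_sq_card r
    _ ≤ (2 * c₀ * Fintype.card V * (1 / 4) ^ r) *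
          (2 * c₀ * Fintype.card V * (1 / 4) ^ r / (1 - 1 / 4)) ^ 2 := by
        gcongr
    _ = 128 / 9 * c₀ ^ 3 * Fintype.card V * (1 / 4) ^ r *
          (Fintype.card V * (1 / 4) ^ r) ^ 2 := by ring
    _ ≤ 16 * c₀ ^ 3 * Fintype.card V * (1 / 4) ^ r * 1 := by
        gcongr
        · norm_num
        · exact pow_le_one₀ (by positivity) hq
    _ = 16 * c₀ ^ 3 * Fintype.card V * (1 / 4) ^ r := mul_one _

theorem sum_sq_outDeg_le_mul_log (h : IsPLB G 3 c₀) (hc₀ : 0 ≤ c₀)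
    (hn : 2 ≤ Fintype.card V) :
    ∑ v, (outDeg G v : ℝ) ^ 2 ≤
      (24 * c₀ + 64 * c₀ ^ 3) * Fintype.card V * Real.log (Fintype.card V) := by
  set n := Fintype.card V
  set L := Nat.log 4 n
  have hband : ∀ r, ∑ v ∈ G.degBand r, (outDeg G v : ℝ) ^ 2 ≤ 8 * c₀ * n := fun r => by
    simpa using h.sum_sq_outDeg_degBand_le (by norm_num) hc₀ r
  have hlow : #{r ∈ range n | r ≤ L} ≤ L + 1 :=
    (card_le_card fun r hr => mem_range.2 (Nat.lt_succ_of_le (mem_filter.1 hr).2)).trans_eq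
      (card_range _)
  have hL : (L : ℝ) + 1 ≤ 3 * Real.log n := natLog_four_add_one_le_three_mul_log hn
  calc ∑ v, (outDeg G v : ℝ) ^ 2
      ≤ ∑ r ∈ range n, ∑ v ∈ G.degBand r, (outDeg G v : ℝ) ^ 2 :=
        G.sum_sq_outDeg_le_sum_degBand
    _ = ∑ r ∈ range n with r ≤ L, ∑ v ∈ G.degBand r, (outDeg G v : ℝ) ^ 2 +
          ∑ r ∈ range n with ¬r ≤ L, ∑ v ∈ G.degBand r, (outDeg G v : ℝ) ^ 2 :=
        (sum_filter_add_sum_filter_not _ _ _).symm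
    _ ≤ ∑ r ∈ range n with r ≤ L, 8 * c₀ * n +
          ∑ r ∈ range n, 16 * c₀ ^ 3 * n * (1 / 4) ^ r := by
        refine add_le_add (sum_le_sum fun r _ => hband r) ?_
        calc _ ≤ ∑ r ∈ range n with ¬r ≤ L, 16 * c₀ ^ 3 * n * (1 / 4) ^ r :=
              sum_le_sum fun r hr => h.sum_sq_outDeg_degBand_le_of_card_lt hc₀
                (Nat.lt_pow_of_log_lt (by norm_num) (not_le.1 (mem_filter.1 hr).2))
          _ ≤ _ := sum_le_sum_of_subset_of_nonneg (filter_subset _ _) fun _ _ _ => by positivity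
    _ ≤ (L + 1) * (8 * c₀ * n) + 16 * c₀ ^ 3 * n * (1 - 1 / 4)⁻¹ := by
        rw [sum_const, nsmul_eq_mul, ← mul_sum]
        gcongr
        · exact_mod_cast hlow
        · exact geom_sum_range_le_of_lt_one (by norm_num) (by norm_num) n
    _ ≤ (24 * c₀ + 64 * c₀ ^ 3) * n * Real.log n := by
        have hlow_bands := mul_le_mul_of_nonneg_left hL (by positivity : 0 ≤ 8 * c₀ * n)
        have hhigh_bands := mul_le_mul_of_nonneg_left (by linarith : 1 ≤ 3 * Real.log n)
          (by positivity : 0 ≤ 64 / 3 * c₀ ^ 3 * n)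
        norm_num
        linarith

end IsPLB

/-- For PLB graphs with exponent `γ = 3`, `Σ_v (d⁺_v)² ≤ C n log n`; for exponent
`γ > 3`, `Σ_v (d⁺_v)² ≤ C n` (constants depending only on `c₀` and `γ`). -/
theorem plb_outdeg_square_bound_large (c₀ : ℝ) (hc₀ : 0 < c₀) :
    (∃ C : ℝ, 0 < C ∧
      ∀ (V : Type) [Fintype V] [LinearOrder V] (G : SimpleGraph V),
        2 ≤ Fintype.card V → IsPLB G 3 c₀ →
          (∑ v : V, ((outDeg G v : ℝ)) ^ 2) ≤
            C * (Fintype.card V : ℝ) * Real.log (Fintype.card V)) ∧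
    (∀ γ : ℝ, 3 < γ →
      ∃ C : ℝ, 0 < C ∧
        ∀ (V : Type) [Fintype V] [LinearOrder V] (G : SimpleGraph V),
          2 ≤ Fintype.card V → IsPLB G γ c₀ →
            (∑ v : V, ((outDeg G v : ℝ)) ^ 2) ≤ C * (Fintype.card V : ℝ)) := by
  refine ⟨⟨24 * c₀ + 64 * c₀ ^ 3, by positivity, fun V _ _ G hn h => ?_⟩, fun γ hγ => ?_⟩
  · classical
    exact h.sum_sq_outDeg_le_mul_log hc₀.le hn
  · have hy1 : (2 : ℝ) ^ (3 - γ) < 1 := Real.rpow_lt_one_of_one_lt_of_neg one_lt_two (by linarith)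
    refine ⟨8 * c₀ / (1 - 2 ^ (3 - γ)), div_pos (by positivity) (by linarith),
      fun V _ _ G _ h => ?_⟩
    classical
    exact h.sum_sq_outDeg_le_s17 hγ hc₀.le
end
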